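/- Let n ≥ 3 and 2 ≤ k ≤ n be integers, and let r, t, c be real numbers. Let M be the symmetric n×n real matrix with M₁₁ = 2eᵗ, Mᵢᵢ = 2eᵗ for 2 ≤ i ≤ n−1, M₁ₙ = Mₙ₁ = 2reᵗ, Mₙₙ = r²eᵗ + c, and all other entries zero. Then σ_k(M) = 2^{k−1} C(n−2, k−2)(e^{(k−1)t} c − e^{kt} r²) + 2^{k−1} C(n−2, k−1)(e^{kt} r² + e^{(k−1)t} c) + 2^k C(n−1, k) e^{kt}, where C(·,·) denotes the binomial coefficient. -/

import Mathlib

/-!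
`σ_k(M)` is the coefficient of `X^k` in `det (1 + X M)`. The matrix `M` is `2eᵗ` times the
identity except on the two indices `0` and `n - 1`, which it couples only to each other, so
`det (1 + X M) = (1 + τ X + δ X²) (1 + 2eᵗ X)^(n-2)` where `τ` and `δ` are the trace and the
determinant of the `2 × 2` block of `M` on these indices. Reading off the coefficient of `X^k`
and applying Pascal's rule to `C(n-1, k)` gives the formula.
-/

/-- The `k`-th elementary symmetric function of a square real matrix:
the sum of its `k × k` principal minors. -/
noncomputable def sigmaK {ι : Type*} [Fintype ι] [DecidableEq ι] (k : ℕ)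
    (A : Matrix ι ι ℝ) : ℝ :=
  ∑ s ∈ (Finset.univ : Finset ι).powersetCard k,
    Matrix.det (fun i j : {x : ι // x ∈ s} => A i.1 j.1)

/-- The Hessian matrix of `u` at `x`, with entries `∂ᵢ∂ⱼ u (x)`. -/
noncomputable def hessian {ι : Type*} [Fintype ι] [DecidableEq ι]
    (u : (ι → ℝ) → ℝ) (x : ι → ℝ) : Matrix ι ι ℝ :=
  fun i j => fderiv ℝ (fun y => fderiv ℝ u y (Pi.single j 1)) x (Pi.single i 1)

open Polynomial Finset

namespace Matrix

variable {ι R : Type*} [DecidableEq ι] [CommRing R]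

theorem det_eq_det_submatrix_mul_prod_compl [Fintype ι] (A : Matrix ι ι R) (s : Finset ι)
    (hA : ∀ i j, i ≠ j → (i ∉ s ∨ j ∉ s) → A i j = 0) :
    A.det = (A.submatrix ((↑) : s → ι) (↑)).det * ∏ i ∈ sᶜ, A i i := by
  have hdiag : toSquareBlockProp A (· ∉ s) = diagonal fun i : {i // i ∉ s} => A i i := by
    ext i j
    rcases eq_or_ne i j with rfl | hij
    · simp [toSquareBlockProp, toBlock]
    · rw [diagonal_apply_ne _ hij]
      exact hA i j (fun h => hij (Subtype.ext h)) (.inl i.2)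
  rw [A.twoBlockTriangular_det (· ∈ s) fun i hi j _ => hA i j (by grind) (.inl hi), hdiag,
    det_diagonal, prod_subtype sᶜ fun _ => mem_compl]
  congr 1
  convert rfl
  ext i j
  rfl

theorem det_submatrix_pair (A : Matrix ι ι R) {a b : ι} (hab : a ≠ b) :
    (A.submatrix ((↑) : ({a, b} : Finset ι) → ι) (↑)).det = A a a * A b b - A a b * A b a := by
  let e : Fin 2 ≃ ({a, b} : Finset ι) :=
    Equiv.ofBijective ![⟨a, by simp⟩, ⟨b, by simp⟩] ⟨by
      intro i j h
      fin_cases i <;> fin_cases j <;> simp_all [Subtype.ext_iff, hab.symm], by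
      rintro ⟨x, hx⟩
      rcases mem_insert.1 hx with rfl | hx
      · exact ⟨0, rfl⟩
      · exact ⟨1, by simp [mem_singleton.1 hx]⟩⟩
  rw [← det_submatrix_equiv_self e, det_fin_two]
  rfl

theorem det_one_add_X_smul_of_offDiag_pair [Fintype ι] (A : Matrix ι ι R) {a b : ι} (hab : a ≠ b)
    (hA : ∀ i j, i ≠ j → (i ∉ ({a, b} : Finset ι) ∨ j ∉ ({a, b} : Finset ι)) → A i j = 0) :
    (1 + (X : R[X]) • A.map C).det
      = (1 + C (A a a + A b b) * X + C (A a a * A b b - A a b * A b a) * X ^ 2)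
        * ∏ i ∈ ({a, b} : Finset ι)ᶜ, (1 + C (A i i) * X) := by
  rw [det_eq_det_submatrix_mul_prod_compl _ {a, b}
      fun i j hij hout => by simp [one_apply_ne hij, hA i j hij hout],
    det_submatrix_pair _ hab]
  simp only [add_apply, one_apply_eq, smul_apply, map_apply, smul_eq_mul, mul_comm X,
    one_apply_ne hab, one_apply_ne hab.symm, zero_add, map_add, map_sub, map_mul]
  ring

end Matrix

namespace Polynomial

variable {R : Type*} [CommSemiring R]

theorem coeff_one_add_C_mul_X_pow (γ : R) (m j : ℕ) :
    ((1 + C γ * X) ^ m).coeff j = m.choose j * γ ^ j := by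
  rw [show (1 + C γ * X) ^ m = ((1 + X) ^ m).comp (C γ * X) by simp, comp_C_mul_X_coeff,
    coeff_one_add_X_pow]

theorem coeff_one_add_C_mul_X_add_C_mul_X_sq_mul (α β : R) (q : R[X]) (k : ℕ) :
    ((1 + C α * X + C β * X ^ 2) * q).coeff (k + 2)
      = q.coeff (k + 2) + α * q.coeff (k + 1) + β * q.coeff k := by
  simp [add_mul, mul_assoc, coeff_C_mul, coeff_X_pow_mul', coeff_X_mul]

end Polynomial

theorem sigmaK_eq_coeff_det_one_add_X_smul {ι : Type*} [Fintype ι] [DecidableEq ι] (k : ℕ)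
    (A : Matrix ι ι ℝ) : sigmaK k A = (1 + (X : ℝ[X]) • A.map C).det.coeff k :=
  (Matrix.coeff_det_one_add_X_smul_eq_sum_minors A k).symm

theorem sigmaK_of_offDiag_pair {ι : Type*} [Fintype ι] [DecidableEq ι] (A : Matrix ι ι ℝ)
    {a b : ι} (hab : a ≠ b)
    (hA : ∀ i j, i ≠ j → (i ∉ ({a, b} : Finset ι) ∨ j ∉ ({a, b} : Finset ι)) → A i j = 0)
    {d : ℝ} (hd : ∀ i ∈ ({a, b} : Finset ι)ᶜ, A i i = d) (m : ℕ) :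
    sigmaK (m + 2) A
      = (Fintype.card ι - 2).choose (m + 2) * d ^ (m + 2)
        + (A a a + A b b) * ((Fintype.card ι - 2).choose (m + 1) * d ^ (m + 1))
        + (A a a * A b b - A a b * A b a) * ((Fintype.card ι - 2).choose m * d ^ m) := by
  rw [sigmaK_eq_coeff_det_one_add_X_smul, Matrix.det_one_add_X_smul_of_offDiag_pair A hab hA,
    prod_congr rfl fun i hi => by rw [hd i hi], prod_const, card_compl, card_pair hab,
    coeff_one_add_C_mul_X_add_C_mul_X_sq_mul, coeff_one_add_C_mul_X_pow,
    coeff_one_add_C_mul_X_pow, coeff_one_add_C_mul_X_pow]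

theorem sigmaK_of_hessian_matrix_general (n k : ℕ) (hn : 3 ≤ n) (hk2 : 2 ≤ k)
    (r t c : ℝ) (M : Matrix (Fin n) (Fin n) ℝ)
    (hM : M = Matrix.of fun i j : Fin n =>
      if i = j then (if (i : ℕ) = n - 1 then r ^ 2 * Real.exp t + c else 2 * Real.exp t)
      else if ((i : ℕ) = 0 ∧ (j : ℕ) = n - 1) ∨ ((i : ℕ) = n - 1 ∧ (j : ℕ) = 0)
        then 2 * r * Real.exp t else 0) :
    sigmaK k M
      = 2 ^ (k - 1) * ((n - 2).choose (k - 2) : ℝ)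
          * (Real.exp (((k : ℝ) - 1) * t) * c - Real.exp (k * t) * r ^ 2)
      + 2 ^ (k - 1) * ((n - 2).choose (k - 1) : ℝ)
          * (Real.exp (k * t) * r ^ 2 + Real.exp (((k : ℝ) - 1) * t) * c)
      + 2 ^ k * ((n - 1).choose k : ℝ) * Real.exp (k * t) := by
  obtain ⟨m, rfl⟩ : ∃ m, k = m + 2 := ⟨k - 2, by omega⟩
  have hn1 : n - 1 ≠ 0 := by omega
  let a : Fin n := ⟨0, by omega⟩
  let b : Fin n := ⟨n - 1, by omega⟩
  have hab : a ≠ b := by simp [a, b, Fin.ext_iff, hn1.symm]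
  have hoff : ∀ i j, i ≠ j → (i ∉ ({a, b} : Finset (Fin n)) ∨ j ∉ ({a, b} : Finset (Fin n))) →
      M i j = 0 := by
    intro i j hij hout
    simp only [a, b, mem_insert, mem_singleton, Fin.ext_iff] at hout
    rw [hM, Matrix.of_apply, if_neg hij, if_neg (by omega)]
  have hdiag : ∀ i ∈ ({a, b} : Finset (Fin n))ᶜ, M i i = 2 * Real.exp t := by
    intro i hi
    simp only [a, b, mem_compl, mem_insert, mem_singleton, not_or, Fin.ext_iff] at hi
    rw [hM, Matrix.of_apply, if_pos rfl, if_neg hi.2]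
  have hchoose : (n - 1).choose (m + 2) = (n - 2).choose (m + 1) + (n - 2).choose (m + 2) := by
    rw [show n - 1 = n - 2 + 1 by omega, Nat.choose_succ_succ']
  rw [sigmaK_of_offDiag_pair M hab hoff hdiag, Fintype.card_fin, hchoose,
    show ((m + 2 : ℕ) : ℝ) - 1 = (m + 1 : ℕ) by push_cast; ring,
    Real.exp_nat_mul, Real.exp_nat_mul]
  simp only [hM, Matrix.of_apply, a, b, if_neg hab, if_neg hab.symm, hn1, hn1.symm, and_self,
    or_false, false_or, if_true]
  push_cast
  ring

/-- Explicit computation of `σ_k` of the matrix arising as the Hessian of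
`u(x,t) = r² eᵗ + h(t)` (with `c = h''(t)`). -/
theorem sigmaK_of_hessian_matrix (n k : ℕ) (hn : 3 ≤ n) (hk2 : 2 ≤ k) (hkn : k ≤ n)
    (r t c : ℝ) (M : Matrix (Fin n) (Fin n) ℝ)
    (hM : M = Matrix.of fun i j : Fin n =>
      if i = j then (if (i : ℕ) = n - 1 then r ^ 2 * Real.exp t + c else 2 * Real.exp t)
      else if ((i : ℕ) = 0 ∧ (j : ℕ) = n - 1) ∨ ((i : ℕ) = n - 1 ∧ (j : ℕ) = 0)
        then 2 * r * Real.exp t else 0) :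
    sigmaK k M
      = 2 ^ (k - 1) * ((n - 2).choose (k - 2) : ℝ)
          * (Real.exp (((k : ℝ) - 1) * t) * c - Real.exp (k * t) * r ^ 2)
      + 2 ^ (k - 1) * ((n - 2).choose (k - 1) : ℝ)
          * (Real.exp (k * t) * r ^ 2 + Real.exp (((k : ℝ) - 1) * t) * c)
      + 2 ^ k * ((n - 1).choose k : ℝ) * Real.exp (k * t) :=
  sigmaK_of_hessian_matrix_general n k hn hk2 r t c M hM
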